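/- The measure on [0,1]^2 with density 1/(x + y - xy)^2 is invariant under Ito's natural extension map ℱ of the Farey tent map, where ℱ(x,y) = (x/(1-x), y/(1+y)) for x ≤ 1/2 and ℱ(x,y) = ((1-x)/x, 1/(1+y)) for x > 1/2. -/

import Mathlib

open MeasureTheory

noncomputable section

/-- Ito's natural extension map of the Farey tent map on `Ω = [0,1]²`. -/
def Fbar (p : ℝ × ℝ) : ℝ × ℝ :=
  if p.1 ≤ 1 / 2 then (p.1 / (1 - p.1), p.2 / (1 + p.2))
  else ((1 - p.1) / p.1, 1 / (1 + p.2))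

/-- The measure on `[0,1]²` with density `1/(x + y - xy)²`. -/
def muBar : Measure (ℝ × ℝ) :=
  (volume.restrict (Set.Icc (0 : ℝ) 1 ×ˢ Set.Icc (0 : ℝ) 1)).withDensity fun p =>
    ENNReal.ofReal (1 / (p.1 + p.2 - p.1 * p.2) ^ 2)

/-! On each half `x ≤ 1/2`, `x > 1/2` of `Ω` the map `ℱ` is a product of two Möbius maps of the
line, each a bijection between intervals, so it maps the left half onto `[0,1] × [0,1/2]` and the
right half onto `[0,1) × [1/2,1]`; these images tile `Ω` up to null lines. With `(u,v) = ℱ(x,y)`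
one has `u + v - uv = (x + y - xy) / (a b)` and `|det Dℱ| = (a b)⁻²`, where `a b = (1-x)(1+y)`
resp. `x(1+y)`. Hence the density `ρ = (x + y - xy)⁻²` satisfies `|det Dℱ| · ρ ∘ ℱ = ρ` on both
halves, and the change of variables formula carries `μ̄` on each half to `μ̄` on its image. -/

open Set
open scoped ENNReal

theorem withDensity_image_eq_of_abs_det_mul {E : Type*} [NormedAddCommGroup E] [NormedSpace ℝ E]
    [FiniteDimensional ℝ E] [MeasurableSpace E] [BorelSpace E] (μ : Measure E)
    [μ.IsAddHaarMeasure] {f : E → E} {f' : E → E →L[ℝ] E} {s : Set E} {ρ : E → ℝ≥0∞}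
    (hs : MeasurableSet s) (hf' : ∀ x ∈ s, HasFDerivWithinAt f (f' x) s x) (hf : InjOn f s)
    (hρ : ∀ x ∈ s, ENNReal.ofReal |(f' x).det| * ρ (f x) = ρ x) :
    μ.withDensity ρ (f '' s) = μ.withDensity ρ s := by
  rw [withDensity_apply', withDensity_apply',
    lintegral_image_eq_lintegral_abs_det_fderiv_mul μ hs hf' hf]
  exact setLIntegral_congr_fun hs hρ

theorem det_prodMap_toSpanSingleton (a b : ℝ) :
    ((ContinuousLinearMap.toSpanSingleton ℝ a).prodMap
      (ContinuousLinearMap.toSpanSingleton ℝ b)).det = a * b := by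
  rw [ContinuousLinearMap.det, ContinuousLinearMap.coe_prodMap, LinearMap.det_prodMap]
  simp

theorem withDensity_preimage_inter_prod_eq {f g f' g' : ℝ → ℝ} {ρ : ℝ × ℝ → ℝ≥0∞}
    {s₁ s₂ t₁ t₂ : Set ℝ} (hs₁ : MeasurableSet s₁) (hs₂ : MeasurableSet s₂)
    (hfm : Measurable f) (hgm : Measurable g)
    (hf : ∀ x ∈ s₁, HasDerivAt f (f' x) x) (hg : ∀ y ∈ s₂, HasDerivAt g (g' y) y)
    (hfb : BijOn f s₁ t₁) (hgb : BijOn g s₂ t₂)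
    (hρ : ∀ x ∈ s₁, ∀ y ∈ s₂, ENNReal.ofReal |f' x * g' y| * ρ (f x, g y) = ρ (x, y))
    {E : Set (ℝ × ℝ)} (hE : MeasurableSet E) :
    volume.withDensity ρ ((fun p => (f p.1, g p.2)) ⁻¹' E ∩ s₁ ×ˢ s₂) =
      volume.withDensity ρ (E ∩ t₁ ×ˢ t₂) := by
  have hb := hfb.prodMap hgb
  rw [← hb.image_eq, ← image_preimage_inter]
  refine (withDensity_image_eq_of_abs_det_mul (f := fun p => (f p.1, g p.2)) volume
    ((hfm.prodMap hgm hE).inter (hs₁.prod hs₂))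
    (fun p hp =>
      ((hf p.1 hp.2.1).hasFDerivAt.prodMap p (hg p.2 hp.2.2).hasFDerivAt).hasFDerivWithinAt)
    (hb.injOn.mono inter_subset_right) fun p hp => ?_).symm
  rw [det_prodMap_toSpanSingleton]
  exact hρ p.1 hp.2.1 p.2 hp.2.2

theorem ae_fst_ne (a : ℝ) : ∀ᵐ p : ℝ × ℝ, p.1 ≠ a := by
  rw [Measure.volume_eq_prod]
  exact Measure.quasiMeasurePreserving_fst.ae (Measure.ae_ne volume a)

theorem ae_snd_ne (a : ℝ) : ∀ᵐ p : ℝ × ℝ, p.2 ≠ a := by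
  rw [Measure.volume_eq_prod]
  exact Measure.quasiMeasurePreserving_snd.ae (Measure.ae_ne volume a)

theorem measure_inter_Icc_prod_add_inter_Ico_prod {μ : Measure (ℝ × ℝ)} (hμ : μ ≪ volume)
    {E : Set (ℝ × ℝ)} (hE : E ⊆ Icc 0 1 ×ˢ Icc 0 1) :
    μ (E ∩ Icc 0 1 ×ˢ Icc 0 (1 / 2)) + μ (E ∩ Ico 0 1 ×ˢ Icc (1 / 2) 1) = μ E := by
  rw [← measure_inter_add_sdiff E (measurableSet_Icc.prod measurableSet_Icc)]
  congr 1
  refine measure_congr (hμ.ae_eq (Filter.eventuallyEq_set.2 ?_))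
  filter_upwards [ae_fst_ne 1, ae_snd_ne (1 / 2)] with p h1 h2
  have hp := @hE p
  simp only [mem_inter_iff, mem_sdiff, mem_prod, mem_Icc, mem_Ico] at hp ⊢
  grind

def fareyDensity (p : ℝ × ℝ) : ℝ≥0∞ := ENNReal.ofReal (1 / (p.1 + p.2 - p.1 * p.2) ^ 2)

theorem ofReal_mul_fareyDensity {a b x y u v : ℝ} (ha : a ≠ 0) (hb : b ≠ 0)
    (huv : u + v - u * v = (x + y - x * y) / (a * b)) :
    ENNReal.ofReal (1 / (a * b) ^ 2) * fareyDensity (u, v) = fareyDensity (x, y) := by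
  rw [fareyDensity, fareyDensity, ← ENNReal.ofReal_mul (by positivity), huv]
  congr 1
  have : a * b ≠ 0 := mul_ne_zero ha hb
  field_simp

theorem invOn_div_one_add_div_one_sub :
    InvOn (fun y : ℝ => y / (1 + y)) (fun x => x / (1 - x)) {1}ᶜ {-1}ᶜ := by
  constructor
  · intro x hx
    have : 1 - x ≠ 0 := sub_ne_zero.2 (Ne.symm hx)
    field_simp
    ring_nf
  · intro y hy
    have : 1 + y ≠ 0 := by grind
    field_simp
    ring_nf

theorem invOn_one_div_one_add_one_sub_div :
    InvOn (fun y : ℝ => 1 / (1 + y)) (fun x => (1 - x) / x) {0}ᶜ {-1}ᶜ := by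
  constructor
  · intro x (hx : x ≠ 0)
    field_simp
    ring_nf
  · intro y hy
    have : 1 + y ≠ 0 := by grind
    field_simp
    ring_nf

theorem bijOn_div_one_sub : BijOn (fun x : ℝ => x / (1 - x)) (Icc 0 (1 / 2)) (Icc 0 1) := by
  refine InvOn.bijOn ⟨invOn_div_one_add_div_one_sub.1.mono fun x hx => ?_,
    invOn_div_one_add_div_one_sub.2.mono fun y hy => ?_⟩ (fun x hx => ?_) fun y hy => ?_
  · exact (show x < 1 by linarith [hx.2]).ne
  · exact (show -1 < y by linarith [hy.1]).ne'
  · exact ⟨div_nonneg hx.1 (by linarith [hx.2]),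
      (div_le_one (by linarith [hx.2])).2 (by linarith [hx.2])⟩
  · exact ⟨div_nonneg hy.1 (by linarith [hy.1]),
      (div_le_iff₀ (by linarith [hy.1])).2 (by linarith [hy.2])⟩

theorem bijOn_div_one_add : BijOn (fun y : ℝ => y / (1 + y)) (Icc 0 1) (Icc 0 (1 / 2)) :=
  bijOn_div_one_sub.symm ⟨invOn_div_one_add_div_one_sub.2.mono fun y hy =>
    (show -1 < y by linarith [hy.1]).ne', invOn_div_one_add_div_one_sub.1.mono fun x hx =>
    (show x < 1 by linarith [hx.2]).ne⟩

theorem bijOn_one_sub_div : BijOn (fun x : ℝ => (1 - x) / x) (Ioc (1 / 2) 1) (Ico 0 1) := by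
  refine InvOn.bijOn ⟨invOn_one_div_one_add_one_sub_div.1.mono fun x hx => ?_,
    invOn_one_div_one_add_one_sub_div.2.mono fun y hy => ?_⟩ (fun x hx => ?_) fun y hy => ?_
  · exact (show 0 < x by linarith [hx.1]).ne'
  · exact (show -1 < y by linarith [hy.1]).ne'
  · exact ⟨div_nonneg (by linarith [hx.2]) (by linarith [hx.1]),
      (div_lt_one (by linarith [hx.1])).2 (by linarith [hx.1])⟩
  · exact ⟨(lt_div_iff₀ (by linarith [hy.1])).2 (by linarith [hy.2]),
      (div_le_one (by linarith [hy.1])).2 (by linarith [hy.1])⟩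

theorem bijOn_one_div_one_add : BijOn (fun y : ℝ => 1 / (1 + y)) (Icc 0 1) (Icc (1 / 2) 1) := by
  refine InvOn.bijOn ⟨invOn_one_div_one_add_one_sub_div.2.mono fun y hy => ?_,
    invOn_one_div_one_add_one_sub_div.1.mono fun x hx => ?_⟩ (fun y hy => ?_) fun x hx => ?_
  · exact (show -1 < y by linarith [hy.1]).ne'
  · exact (show 0 < x by linarith [hx.1]).ne'
  · exact ⟨(le_div_iff₀ (by linarith [hy.1])).2 (by linarith [hy.2]),
      (div_le_one (by linarith [hy.1])).2 (by linarith [hy.1])⟩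
  · exact ⟨div_nonneg (by linarith [hx.2]) (by linarith [hx.1]),
      (div_le_one (by linarith [hx.1])).2 (by linarith [hx.1])⟩

theorem withDensity_fareyDensity_left_branch {E : Set (ℝ × ℝ)} (hE : MeasurableSet E) :
    volume.withDensity fareyDensity
        ((fun p : ℝ × ℝ => (p.1 / (1 - p.1), p.2 / (1 + p.2))) ⁻¹' E ∩ Icc 0 (1 / 2) ×ˢ Icc 0 1) =
      volume.withDensity fareyDensity (E ∩ Icc 0 1 ×ˢ Icc 0 (1 / 2)) := by
  refine withDensity_preimage_inter_prod_eq measurableSet_Icc measurableSet_Icc (by fun_prop)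
    (by fun_prop) (f' := fun x => 1 / (1 - x) ^ 2) (g' := fun y => 1 / (1 + y) ^ 2)
    (fun x hx => ?_) (fun y hy => ?_) bijOn_div_one_sub bijOn_div_one_add
    (fun x hx y hy => ?_) hE
  · have : 1 - x ≠ 0 := by linarith [hx.2]
    exact ((hasDerivAt_id' x).div ((hasDerivAt_id' x).const_sub 1) this).congr_deriv (by ring)
  · have : 1 + y ≠ 0 := by linarith [hy.1]
    exact ((hasDerivAt_id' y).div ((hasDerivAt_id' y).const_add 1) this).congr_deriv (by ring)
  · have hx1 : 1 - x ≠ 0 := by linarith [hx.2]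
    have hy1 : 1 + y ≠ 0 := by linarith [hy.1]
    rw [show 1 / (1 - x) ^ 2 * (1 / (1 + y) ^ 2) = 1 / ((1 - x) * (1 + y)) ^ 2 by field_simp,
      abs_of_nonneg (by positivity)]
    exact ofReal_mul_fareyDensity hx1 hy1 (by field_simp; ring)

theorem withDensity_fareyDensity_right_branch {E : Set (ℝ × ℝ)} (hE : MeasurableSet E) :
    volume.withDensity fareyDensity
        ((fun p : ℝ × ℝ => ((1 - p.1) / p.1, 1 / (1 + p.2))) ⁻¹' E ∩ Ioc (1 / 2) 1 ×ˢ Icc 0 1) =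
      volume.withDensity fareyDensity (E ∩ Ico 0 1 ×ˢ Icc (1 / 2) 1) := by
  refine withDensity_preimage_inter_prod_eq measurableSet_Ioc measurableSet_Icc (by fun_prop)
    (by fun_prop) (f' := fun x => -1 / x ^ 2) (g' := fun y => -1 / (1 + y) ^ 2)
    (fun x hx => ?_) (fun y hy => ?_) bijOn_one_sub_div bijOn_one_div_one_add
    (fun x hx y hy => ?_) hE
  · have : x ≠ 0 := by linarith [hx.1]
    exact (((hasDerivAt_id' x).const_sub 1).div (hasDerivAt_id' x) this).congr_deriv (by ring)
  · have : 1 + y ≠ 0 := by linarith [hy.1]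
    exact ((hasDerivAt_const y 1).div ((hasDerivAt_id' y).const_add 1) this).congr_deriv (by ring)
  · have hx0 : x ≠ 0 := by linarith [hx.1]
    have hy1 : 1 + y ≠ 0 := by linarith [hy.1]
    rw [show -1 / x ^ 2 * (-1 / (1 + y) ^ 2) = 1 / (x * (1 + y)) ^ 2 by field_simp,
      abs_of_nonneg (by positivity)]
    exact ofReal_mul_fareyDensity hx0 hy1 (by field_simp; ring)

theorem preimage_Fbar_inter (E : Set (ℝ × ℝ)) :
    Fbar ⁻¹' E ∩ Icc 0 1 ×ˢ Icc 0 1 =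
      (fun p : ℝ × ℝ => (p.1 / (1 - p.1), p.2 / (1 + p.2))) ⁻¹' E ∩ Icc 0 (1 / 2) ×ˢ Icc 0 1 ∪
        (fun p : ℝ × ℝ => ((1 - p.1) / p.1, 1 / (1 + p.2))) ⁻¹' E ∩ Ioc (1 / 2) 1 ×ˢ Icc 0 1 := by
  ext ⟨x, y⟩
  simp only [Fbar, mem_inter_iff, mem_union, mem_preimage, mem_prod, mem_Icc, mem_Ioc]
  split_ifs <;> grind

/-- The measure with density `1/(x+y-xy)²` on `[0,1]²` is invariant under Ito's natural
extension map `ℱ` of the Farey tent map. -/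
theorem stmt10 (E : Set (ℝ × ℝ)) (hE : MeasurableSet E)
    (hE1 : E ⊆ Set.Icc (0 : ℝ) 1 ×ˢ Set.Icc (0 : ℝ) 1) :
    muBar (Fbar ⁻¹' E) = muBar E := by
  have hΩ : MeasurableSet (Icc (0 : ℝ) 1 ×ˢ Icc (0 : ℝ) 1) :=
    measurableSet_Icc.prod measurableSet_Icc
  have hmuBar : muBar = (volume.withDensity fareyDensity).restrict (Icc 0 1 ×ˢ Icc 0 1) :=
    (restrict_withDensity hΩ _).symm
  have hdisj : Disjoint (Icc (0 : ℝ) (1 / 2) ×ˢ Icc (0 : ℝ) 1) (Ioc (1 / 2) 1 ×ˢ Icc 0 1) :=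
    disjoint_prod.2 (Or.inl ((Iic_disjoint_Ioc le_rfl).mono_left Icc_subset_Iic_self))
  rw [hmuBar, Measure.restrict_apply' hΩ, Measure.restrict_apply' hΩ, inter_eq_left.2 hE1,
    preimage_Fbar_inter, measure_union (hdisj.mono inter_subset_right inter_subset_right)
      ((by fun_prop : Measurable fun p : ℝ × ℝ => ((1 - p.1) / p.1, 1 / (1 + p.2))) hE
        |>.inter (measurableSet_Ioc.prod measurableSet_Icc)),
    withDensity_fareyDensity_left_branch hE, withDensity_fareyDensity_right_branch hE]
  exact measure_inter_Icc_prod_add_inter_Ico_prod (withDensity_absolutelyContinuous _ _) hE1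

end
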